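/- Let l ≥ 1 be an integer and a, b ∈ ℝ, and suppose r ≥ |a| + |b| + 1. Then for every n ∈ {1,…,l} there exists a real eigenvalue E of the real symmetric matrix D_r^{a,b} such that |E − 2r²·cos(πn/(l+1))| ≤ 3r. -/

import Mathlib

open Real Finset

/-- The discrete Dirichlet Laplacian on `{1,…,l}` (indices shifted to `Fin l`). -/
noncomputable def lapMat (l : ℕ) : Matrix (Fin l) (Fin l) ℝ :=
  fun x y => if (x : ℤ) = (y : ℤ) + 1 ∨ (y : ℤ) = (x : ℤ) + 1 then 1 else 0

/-- The matrix `D_r^{a,b} = r² Δ_l + (a+r) E_{1,1} + (b+r) E_{l,l}`. -/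
noncomputable def Dmat (l : ℕ) (a b r : ℝ) : Matrix (Fin l) (Fin l) ℝ :=
  fun x y =>
    r^2 * lapMat l x y
    + (if (x : ℕ) = 0 ∧ (y : ℕ) = 0 then a + r else 0)
    + (if (x : ℕ) = l - 1 ∧ (y : ℕ) = l - 1 then b + r else 0)

/-! The vector `v x = sin (θ (x + 1))` with `θ = π (n + 1) / (l + 1)` is an exact eigenvector of
`Δ_l` with eigenvalue `2 cos θ`, because `sin (θ k)` vanishes at the virtual boundary sites `k = 0`
and `k = l + 1`. The boundary terms of `D_r^{a,b}` act on `v` diagonally with entries of size at most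
`3 r`, so `v` is a `3 r`-approximate eigenvector of the symmetric matrix `D_r^{a,b}` for
`2 r² cos θ`. Expanding `v` in an orthonormal eigenbasis then shows that some eigenvalue lies
within `3 r` of `2 r² cos θ`. -/

open Matrix

open Module End in
theorem LinearMap.IsSymmetric.exists_hasEigenvalue_abs_sub_le {𝕜 E : Type*} [RCLike 𝕜]
    [NormedAddCommGroup E] [InnerProductSpace 𝕜 E] [FiniteDimensional 𝕜 E] {T : E →ₗ[𝕜] E}
    (hT : T.IsSymmetric) {v : E} (hv : v ≠ 0) {μ ε : ℝ}
    (h : ‖T v - (μ : 𝕜) • v‖ ≤ ε * ‖v‖) :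
    ∃ e : ℝ, HasEigenvalue T e ∧ |e - μ| ≤ ε := by
  set B := hT.eigenvectorBasis rfl
  set eig := hT.eigenvalues rfl
  have : Nonempty (Fin (finrank 𝕜 E)) := ⟨⟨0, finrank_pos_iff_exists_ne_zero.2 ⟨v, hv⟩⟩⟩
  obtain ⟨i, -, hmin⟩ := univ.exists_min_image (fun i => |eig i - μ|) univ_nonempty
  refine ⟨eig i, hT.hasEigenvalue_eigenvalues rfl i, ?_⟩
  have hrepr : ∀ j, B.repr (T v - (μ : 𝕜) • v) j = ((eig j - μ : ℝ) : 𝕜) * B.repr v j := by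
    intro j
    simp only [map_sub, map_smul, PiLp.sub_apply, PiLp.smul_apply, smul_eq_mul, B, eig,
      hT.eigenvectorBasis_apply_self_apply]
    ring
  have key : |eig i - μ| * ‖v‖ ≤ ‖T v - (μ : 𝕜) • v‖ := by
    rw [← B.repr.norm_map v, ← B.repr.norm_map]
    refine pow_le_pow_iff_left₀ (by positivity) (norm_nonneg _) two_ne_zero |>.1 ?_
    rw [mul_pow, EuclideanSpace.norm_sq_eq, EuclideanSpace.norm_sq_eq, mul_sum]
    refine sum_le_sum fun j _ => ?_
    rw [hrepr, norm_mul, mul_pow, RCLike.norm_ofReal]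
    have hij := hmin j (mem_univ j)
    gcongr
  exact le_of_mul_le_mul_right (key.trans h) (norm_pos_iff.2 hv)

theorem Matrix.IsHermitian.exists_mem_spectrum_abs_sub_le {𝕜 n : Type*} [RCLike 𝕜] [Fintype n]
    [DecidableEq n] {A : Matrix n n 𝕜} (hA : A.IsHermitian) {v : n → 𝕜} (hv : v ≠ 0) {μ ε : ℝ}
    (h : ‖WithLp.toLp 2 (A *ᵥ v - μ • v)‖ ≤ ε * ‖WithLp.toLp 2 v‖) :
    ∃ e ∈ spectrum ℝ A, |e - μ| ≤ ε := by
  obtain ⟨e, he, hle⟩ :=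
    (isSymmetric_toEuclideanLin_iff.mpr hA).exists_hasEigenvalue_abs_sub_le
      (v := WithLp.toLp 2 v) (by simpa using hv) (by rwa [← RCLike.real_smul_eq_coe_smul (K := 𝕜)])
  refine ⟨e, spectrum.of_algebraMap_mem 𝕜 ?_, hle⟩
  rw [← spectrum_toLpLin 2]
  exact he.mem_spectrum

theorem WithLp.norm_toLp_mul_le {𝕜 n : Type*} [RCLike 𝕜] [Fintype n] {d : n → 𝕜} {C : ℝ}
    (hd : ∀ i, ‖d i‖ ≤ C) (v : n → 𝕜) : ‖WithLp.toLp 2 (d * v)‖ ≤ C * ‖WithLp.toLp 2 v‖ := by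
  rcases isEmpty_or_nonempty n with hn | ⟨⟨i⟩⟩
  · simp [Subsingleton.elim v 0]
  have hC : 0 ≤ C := (norm_nonneg _).trans (hd i)
  refine pow_le_pow_iff_left₀ (norm_nonneg _) (by positivity) two_ne_zero |>.1 ?_
  rw [mul_pow, EuclideanSpace.norm_sq_eq, EuclideanSpace.norm_sq_eq, mul_sum]
  refine sum_le_sum fun j _ => ?_
  rw [PiLp.toLp_apply, Pi.mul_apply, norm_mul, mul_pow]
  have hdj := hd j
  gcongr

theorem lapMat_mulVec_of_boundary_eq_zero {l : ℕ} (f : ℕ → ℝ) (h0 : f 0 = 0)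
    (hl : f (l + 1) = 0) :
    lapMat l *ᵥ (fun y : Fin l => f (y + 1)) = fun x : Fin l => f x + f (x + 2) := by
  ext x
  have hsplit : ∀ y : Fin l, lapMat l x y * f (y + 1) =
      (if (x : ℕ) = y + 1 then f (y + 1) else 0) + (if (y : ℕ) = x + 1 then f (y + 1) else 0) := by
    intro y
    simp only [lapMat]
    split_ifs <;> first | omega | ring
  -- After shifting indices, both sums run over `range (l + 1)`, and the extra term is `f 0` or
  -- `f (l + 1)`.
  have hleft := sum_range_succ' (fun k => if (x : ℕ) = k then f k else 0) l
  have hright := sum_range_succ (fun k => if k = (x : ℕ) + 1 then f (k + 1) else 0) l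
  rw [sum_ite_eq, if_pos (mem_range.2 (by omega)), h0, ite_self, add_zero] at hleft
  rw [sum_ite_eq', if_pos (mem_range.2 (by omega)), hl, ite_self, add_zero] at hright
  simp only [mulVec, dotProduct, hsplit, sum_add_distrib]
  rw [Fin.sum_univ_eq_sum_range (fun y => if (x : ℕ) = y + 1 then f (y + 1) else 0),
    Fin.sum_univ_eq_sum_range (fun y => if y = (x : ℕ) + 1 then f (y + 1) else 0), ← hleft,
    ← hright]

noncomputable def sineMode (l : ℕ) (θ : ℝ) : Fin l → ℝ := fun x => sin (θ * ((x : ℕ) + 1))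

theorem lapMat_mulVec_sineMode {l : ℕ} {θ : ℝ} (hθ : sin (θ * (l + 1)) = 0) :
    lapMat l *ᵥ sineMode l θ = (2 * cos θ) • sineMode l θ := by
  have h := lapMat_mulVec_of_boundary_eq_zero (l := l) (fun k : ℕ => sin (θ * k)) (by simp)
    (by exact_mod_cast hθ)
  ext x
  have hx := congrFun h x
  push_cast at hx
  unfold sineMode
  rw [Pi.smul_apply, smul_eq_mul, hx,
    show θ * x = θ * (x + 1) - θ by ring, show θ * (x + 2) = θ * (x + 1) + θ by ring,
    sin_sub, sin_add]
  ring

theorem sineMode_ne_zero {l : ℕ} (hl : 1 ≤ l) {θ : ℝ} (h0 : 0 < θ) (hπ : θ < π) :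
    sineMode l θ ≠ 0 := by
  intro h
  have hfirst := congrFun h ⟨0, hl⟩
  simp only [sineMode, Nat.cast_zero, zero_add, mul_one, Pi.zero_apply] at hfirst
  exact (sin_pos_of_pos_of_lt_pi h0 hπ).ne' hfirst

noncomputable def boundaryPotential (l : ℕ) (a b r : ℝ) : Fin l → ℝ :=
  fun x => (if (x : ℕ) = 0 then a + r else 0) + (if (x : ℕ) = l - 1 then b + r else 0)

theorem Dmat_eq (l : ℕ) (a b r : ℝ) :
    Dmat l a b r = r ^ 2 • lapMat l + diagonal (boundaryPotential l a b r) := by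
  ext x y
  rcases eq_or_ne x y with rfl | hxy
  · simp [Dmat, boundaryPotential, add_assoc]
  · have hxy' : (x : ℕ) ≠ y := Fin.val_ne_of_ne hxy
    have h0 : ¬((x : ℕ) = 0 ∧ (y : ℕ) = 0) := fun h => hxy' (h.1.trans h.2.symm)
    have h1 : ¬((x : ℕ) = l - 1 ∧ (y : ℕ) = l - 1) := fun h => hxy' (h.1.trans h.2.symm)
    simp [Dmat, hxy, h0, h1]

theorem Dmat_isHermitian (l : ℕ) (a b r : ℝ) : (Dmat l a b r).IsHermitian := by
  ext x y
  simp only [conjTranspose_apply, Dmat, lapMat, star_trivial, or_comm, and_comm]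

theorem abs_boundaryPotential_le {l : ℕ} {a b r : ℝ} (hr : |a| + |b| ≤ r) (x : Fin l) :
    |boundaryPotential l a b r x| ≤ 3 * r := by
  have hr0 : 0 ≤ r := by linarith [abs_nonneg a, abs_nonneg b]
  have hterm : ∀ (p : Prop) [Decidable p] (c : ℝ), |if p then c + r else 0| ≤ |c| + r := by
    intro p _ c
    split_ifs
    · exact (abs_add_le c r).trans_eq (by rw [abs_of_nonneg hr0])
    · simpa using add_nonneg (abs_nonneg c) hr0
  unfold boundaryPotential
  linarith [abs_add_le (if (x : ℕ) = 0 then a + r else 0) (if (x : ℕ) = l - 1 then b + r else 0),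
    hterm ((x : ℕ) = 0) a, hterm ((x : ℕ) = l - 1) b]

theorem stmt_11 (l : ℕ) (hl : 1 ≤ l) (a b r : ℝ) (hr : |a| + |b| + 1 ≤ r) (n : Fin l) :
    ∃ E : ℝ, E ∈ spectrum ℝ (Dmat l a b r) ∧
      |E - 2*r^2*Real.cos (π*((n : ℕ)+1)/((l : ℝ)+1))| ≤ 3*r := by
  set θ := π*((n : ℕ)+1)/((l : ℝ)+1) with hθ
  have hθ0 : 0 < θ := by positivity
  have hθπ : θ < π := by
    rw [div_lt_iff₀ (by positivity)]
    have hnl : ((n : ℕ) : ℝ) + 1 < l + 1 := by exact_mod_cast Nat.succ_lt_succ n.isLt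
    nlinarith [pi_pos]
  have hθl : sin (θ * (l + 1)) = 0 := by
    rw [show θ * (l + 1) = ((n + 1 : ℕ) : ℝ) * π by rw [hθ]; field_simp; push_cast; ring]
    exact sin_nat_mul_pi _
  have hres : Dmat l a b r *ᵥ sineMode l θ - (2 * r ^ 2 * cos θ) • sineMode l θ =
      boundaryPotential l a b r * sineMode l θ := by
    rw [Dmat_eq, add_mulVec, smul_mulVec, lapMat_mulVec_sineMode hθl]
    ext x
    simp only [Pi.sub_apply, Pi.add_apply, Pi.smul_apply, Pi.mul_apply, mulVec_diagonal,
      smul_eq_mul]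
    ring
  exact (Dmat_isHermitian l a b r).exists_mem_spectrum_abs_sub_le (sineMode_ne_zero hl hθ0 hθπ)
    (hres ▸ WithLp.norm_toLp_mul_le (abs_boundaryPotential_le (by linarith)) _)
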